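/- A square U^2 occurring in T is special (U is primitive and per(U) ≤ |U|/4) if and only if there exist neighboring runs F, F' of equal period per(U) in T and a layer R of the pyramid P(F,F') such that U^2 is generated by R ∩ (F ∪ F'). -/

import Mathlib

open List

variable {α : Type*}

/-- `frag T a b` is the fragment `T[a..b]` (inclusive, 0-based). -/
def frag (T : List α) (a b : ℕ) : List α := (T.drop a).take (b + 1 - a)

/-- `p` is a period of `S`: `0 < p ≤ |S|` and `S[i] = S[i+p]` for all valid `i`. -/
def IsPeriodOf (p : ℕ) (S : List α) : Prop :=
  0 < p ∧ p ≤ S.length ∧ ∀ i : ℕ, i + p < S.length → S[i]? = S[i + p]?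

/-- The smallest period of `S`. -/
noncomputable def minPeriod (S : List α) : ℕ := sInf {p | IsPeriodOf p S}

/-- `T[a..b]` is a run: periodic (its smallest period occurs at least twice)
and maximal on both sides. -/
def IsRun (T : List α) (a b : ℕ) : Prop :=
  a ≤ b ∧ b < T.length ∧
  2 * minPeriod (frag T a b) ≤ b + 1 - a ∧
  (a = 0 ∨ T[a - 1]? ≠ T[a - 1 + minPeriod (frag T a b)]?) ∧
  (b = T.length - 1 ∨ T[b + 1]? ≠ T[b + 1 - minPeriod (frag T a b)]?)

/-- `W` occurs in `T` at position `s`. -/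
def OccursAt (T : List α) (s : ℕ) (W : List α) : Prop :=
  s + W.length ≤ T.length ∧ (T.drop s).take W.length = W

/-- The set of distinct square substrings of `T`. -/
def Squares (T : List α) : Set (List α) :=
  {W | ∃ X : List α, X ≠ [] ∧ W = X ++ X ∧ W <:+: T}

/-- A non-empty string is primitive if it is not a proper power. -/
def Primitive (U : List α) : Prop :=
  U ≠ [] ∧ ∀ (V : List α) (k : ℕ), U = (List.replicate k V).flatten → k = 1

/-- Cyclic rotation moving the first `c` characters to the end. -/
def rot (c : ℕ) (L : List α) : List α := L.drop c ++ L.take c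

/-- `lam` is the Lyndon root of a periodic string `S`: the lexicographically
smallest rotation of `S[0..per(S))`. -/
def LyndonRootOf [LinearOrder α] (S lam : List α) : Prop :=
  (∃ c < minPeriod S, lam = rot c (S.take (minPeriod S))) ∧
  ∀ c < minPeriod S, lam ≤ rot c (S.take (minPeriod S))

/-- Squares generated by a periodic string `U`: squares contained in `U`
whose smallest period equals that of `U`. -/
def FragSquares (U : List α) : Set (List α) :=
  {W | ∃ X : List α, X ≠ [] ∧ W = X ++ X ∧ W <:+: U ∧ minPeriod W = minPeriod U}

/-- `subper U`: the minimum of `per(X)` over squares `X²` generated by `U`. -/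
noncomputable def subper (U : List α) : ℕ :=
  sInf {q | ∃ X : List α, X ≠ [] ∧ (X ++ X) <:+: U ∧
    minPeriod (X ++ X) = minPeriod U ∧ minPeriod X = q}

/-- Fragments `[a..b]` and `[a'..b']` are neighboring:
`[a-1..b+1] ∩ [a'..b'] ≠ ∅`. -/
def Neighboring (a b a' b' : ℕ) : Prop := a ≤ b' + 1 ∧ a' ≤ b + 1

/-- `T[x..y]` is a layer of the pyramid of the neighboring runs
`F = T[a..b]` and `F' = T[a'..b']` (with `a < a'`): a subperiodic run `R`
with `subper(R) = per(F)` such that `R ∩ (F ∪ F')` is periodic with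
period `per(R)`. -/
def IsLayer (T : List α) (a b a' b' x y : ℕ) : Prop :=
  IsRun T x y ∧
  4 * subper (frag T x y) ≤ minPeriod (frag T x y) ∧
  subper (frag T x y) = minPeriod (frag T a b) ∧
  2 * minPeriod (frag T x y) ≤ min y b' + 1 - max x a ∧
  IsPeriodOf (minPeriod (frag T x y)) (frag T (max x a) (min y b'))

/-- A `τ`-synchronizing set of `T` (Kempa–Kociumaka): consistency and density. -/
def SyncSet (T : List α) (τ : ℕ) (S : Set ℕ) : Prop :=
  (∀ i ∈ S, i + 2 * τ ≤ T.length) ∧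
  (∀ i j : ℕ, i + 2 * τ ≤ T.length → j + 2 * τ ≤ T.length →
    (T.drop i).take (2 * τ) = (T.drop j).take (2 * τ) → (i ∈ S ↔ j ∈ S)) ∧
  (∀ i : ℕ, i + 3 * τ - 1 ≤ T.length →
    ((∀ k ∈ S, k < i ∨ i + τ ≤ k) ↔
      3 * minPeriod ((T.drop i).take (3 * τ - 1)) ≤ τ))

/-!
Extend the two copies of `U` and the square `U²` to maximal runs `F`, `F'` (of period `per U`)
and `R` (of period `|U|`). The length-`|U|` prefix of the root of any square generated by `R` is
a rotation of `U`; as `4 per(U) ≤ |U|`, one of the two pieces of that rotation is long enough for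
the Fine–Wilf lemma, so `subper R = per U` and `R` is a layer of the pyramid of `F` and `F'`.
Conversely, Fine–Wilf on `R ∩ (F ∪ F')` gives `per(U²) = per R ≥ 4 subper R = 4 per U`, and a
square whose period exceeds that of its root has a primitive root.
-/

section

variable {p q g : ℕ} {S U V W : List α}

theorem exists_modEq_mem_Ico (k i : ℕ) (hq : 0 < q) :
    ∃ j, k ≤ j ∧ j < k + q ∧ j ≡ i [MOD q] := by
  have hk := Nat.div_add_mod k q
  have hiq := Nat.mod_lt i hq
  have hkq := Nat.mod_lt k hq
  have hmod (c : ℕ) : q * c + i % q ≡ i [MOD q] := by simp [Nat.ModEq]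
  by_cases h : k % q ≤ i % q
  · exact ⟨q * (k / q) + i % q, by omega, by omega, hmod _⟩
  · refine ⟨q * (k / q + 1) + i % q, ?_, ?_, hmod _⟩ <;> rw [Nat.mul_succ] <;> omega

theorem List.IsInfix.exists_getElem?_eq (h : V <:+: S) :
    ∃ k, V.length + k ≤ S.length ∧ ∀ i < V.length, V[i]? = S[i + k]? := by
  obtain ⟨k, hk, hget⟩ := List.infix_iff_getElem?.mp h
  exact ⟨k, hk, fun i hi => by rw [hget i hi, getElem?_eq_getElem hi]⟩

theorem IsPeriodOf.getElem?_add_mul (h : IsPeriodOf p S) (i : ℕ) :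
    ∀ k, i + k * p < S.length → S[i]? = S[i + k * p]?
  | 0, _ => by simp
  | k + 1, hk => by
    rw [show i + (k + 1) * p = i + k * p + p by ring] at hk ⊢
    rw [h.getElem?_add_mul i k (by omega), h.2.2 _ hk]

theorem IsPeriodOf.getElem?_eq_of_modEq (h : IsPeriodOf p S) {i j : ℕ} (hij : i ≡ j [MOD p])
    (hi : i < S.length) (hj : j < S.length) : S[i]? = S[j]? := by
  wlog hle : i ≤ j generalizing i j
  · exact (this hij.symm hj hi (by omega)).symm
  obtain ⟨k, hk⟩ := (Nat.modEq_iff_dvd' hle).mp hij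
  obtain rfl : j = i + k * p := by rw [mul_comm]; omega
  exact h.getElem?_add_mul i k hj

theorem List.IsInfix.isPeriodOf (hV : V <:+: S) (h : IsPeriodOf p S)
    (hp : p ≤ V.length) : IsPeriodOf p V := by
  obtain ⟨k, hk, hget⟩ := hV.exists_getElem?_eq
  refine ⟨h.1, hp, fun i hi => ?_⟩
  rw [hget i (by omega), hget _ hi, show i + p + k = i + k + p by omega]
  exact h.2.2 _ (by omega)

theorem minPeriod_isPeriodOf (h : S ≠ []) : IsPeriodOf (minPeriod S) S :=
  Nat.sInf_mem (s := {p | IsPeriodOf p S})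
    ⟨S.length, List.length_pos_iff.mpr h, le_rfl, fun _ hi => absurd hi (by omega)⟩

theorem minPeriod_pos (h : S ≠ []) : 0 < minPeriod S := (minPeriod_isPeriodOf h).1

theorem minPeriod_le_length (h : S ≠ []) : minPeriod S ≤ S.length :=
  (minPeriod_isPeriodOf h).2.1

theorem IsPeriodOf.minPeriod_le (h : IsPeriodOf p S) : minPeriod S ≤ p := Nat.sInf_le h

theorem minPeriod_le_minPeriod_of_infix (hV : V <:+: S) (hS : S ≠ [])
    (hle : minPeriod S ≤ V.length) : minPeriod V ≤ minPeriod S :=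
  (hV.isPeriodOf (minPeriod_isPeriodOf hS) hle).minPeriod_le

namespace IsPeriodOf

theorem sub (hp : IsPeriodOf p S) (hq : IsPeriodOf q S) (hqp : q < p)
    (hlen : p + q ≤ S.length) : IsPeriodOf (p - q) S := by
  refine ⟨by omega, by omega, fun i hi => ?_⟩
  by_cases hip : i + p < S.length
  · rw [hp.2.2 i hip, hq.2.2 (i + (p - q)) (by omega), show i + (p - q) + q = i + p by omega]
  · have e₁ := hq.2.2 (i - q) (by omega)
    have e₂ := hp.2.2 (i - q) (by omega)
    rw [show i - q + q = i by omega] at e₁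
    rw [show i - q + p = i + (p - q) by omega] at e₂
    rw [← e₁, e₂]

/-- The Fine–Wilf periodicity lemma, in its weak form `p + q ≤ |S|`. -/
theorem gcd (hp : IsPeriodOf p S) (hq : IsPeriodOf q S) (hlen : p + q ≤ S.length) :
    IsPeriodOf (Nat.gcd p q) S := by
  induction hn : p + q using Nat.strong_induction_on generalizing p q with
  | _ n ih =>
    wlog hqp : q ≤ p generalizing p q
    · rw [Nat.gcd_comm]; exact this hq hp (by omega) (by omega) (by omega)
    rcases hqp.eq_or_lt with rfl | hlt
    · rwa [Nat.gcd_self]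
    rw [← Nat.gcd_sub_self_left hqp]
    exact ih p (by have := hq.1; omega) (hp.sub hq hlt hlen) hq (by omega) (by omega)

theorem minPeriod_dvd (h : IsPeriodOf p S) (hlen : minPeriod S + p ≤ S.length) :
    minPeriod S ∣ p := by
  have hS : S ≠ [] := List.ne_nil_of_length_pos (by have := h.1; have := h.2.1; omega)
  have hmin := minPeriod_isPeriodOf hS
  have hgcd : Nat.gcd (minPeriod S) p = minPeriod S :=
    le_antisymm (Nat.gcd_le_left _ hmin.1) (hmin.gcd h hlen).minPeriod_le
  exact hgcd ▸ Nat.gcd_dvd_right _ _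

/-- Every position of `S` is congruent mod `q` to one of the first `q` positions of `V`. -/
theorem of_infix_of_dvd (hS : IsPeriodOf q S) (hV : V <:+: S) (hg : IsPeriodOf g V)
    (hdvd : g ∣ q) (hlen : q + g ≤ V.length) : IsPeriodOf g S := by
  obtain ⟨k, hk, hget⟩ := hV.exists_getElem?_eq
  have hgq := Nat.le_of_dvd hS.1 hdvd
  refine ⟨hg.1, by omega, fun i hi => ?_⟩
  obtain ⟨j, hkj, hjk, hji⟩ := exists_modEq_mem_Ico k i hS.1
  rw [hS.getElem?_eq_of_modEq hji.symm (by omega) (by omega),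
    hS.getElem?_eq_of_modEq (hji.add_right g).symm hi (by omega),
    show j = j - k + k by omega, show j - k + k + g = j - k + g + k by omega,
    ← hget _ (by omega), ← hget _ (by omega)]
  exact hg.2.2 _ (by omega)

theorem take_isRotated_of_infix (h : IsPeriodOf p S) (hV : V <:+: S) (hVp : V.length = p) :
    S.take p ~r V := by
  obtain ⟨k, hk, hget⟩ := hV.exists_getElem?_eq
  have htake : (S.take p).length = p := by have := h.2.1; simp; omega
  refine ⟨k, List.ext_getElem? fun i => ?_⟩
  by_cases hi : i < p
  · have hmod := Nat.mod_lt (i + k) h.1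
    rw [List.getElem?_rotate (by omega), htake, List.getElem?_take_of_lt hmod,
      hget i (by omega)]
    exact h.getElem?_eq_of_modEq (Nat.mod_modEq _ _) (by have := h.2.1; omega) (by omega)
  · rw [getElem?_eq_none (by simp [htake]; omega), getElem?_eq_none (by omega)]

end IsPeriodOf

theorem getElem?_append_self {i : ℕ} (hi : i < 2 * U.length) :
    (U ++ U)[i]? = U[i % U.length]? := by
  by_cases h : i < U.length
  · rw [List.getElem?_append_left h, Nat.mod_eq_of_lt h]
  · rw [List.getElem?_append_right (by omega), Nat.mod_eq_sub_mod (by omega),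
      Nat.mod_eq_of_lt (by omega)]

theorem IsPeriodOf.append_self (h : IsPeriodOf g U) (hdvd : g ∣ U.length) :
    IsPeriodOf g (U ++ U) := by
  have hgU := h.2.1
  refine ⟨h.1, by simp; omega, fun i hi => ?_⟩
  simp only [List.length_append] at hi
  have hU := Nat.mod_lt i (show 0 < U.length by have := h.1; omega)
  rw [getElem?_append_self (by omega), getElem?_append_self (by omega)]
  refine h.getElem?_eq_of_modEq ?_ hU (Nat.mod_lt _ (by omega))
  exact ((Nat.mod_modEq i _).of_dvd hdvd).trans
    (((Nat.mod_modEq (i + g) _).of_dvd hdvd).trans Nat.add_modEq_right).symm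

theorem isPeriodOf_length_append_self (hU : U ≠ []) : IsPeriodOf U.length (U ++ U) :=
  IsPeriodOf.append_self
    ⟨List.length_pos_iff.mpr hU, le_rfl, fun _ hi => absurd hi (by omega)⟩ dvd_rfl

theorem minPeriod_append_self_dvd (hU : U ≠ []) : minPeriod (U ++ U) ∣ U.length :=
  (isPeriodOf_length_append_self hU).minPeriod_dvd
    (by have := (isPeriodOf_length_append_self hU).minPeriod_le; simp; omega)

theorem getElem?_flatten_replicate (V : List α) {k i : ℕ} (hi : i < k * V.length) :
    (replicate k V).flatten[i]? = V[i % V.length]? := by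
  induction k generalizing i with
  | zero => omega
  | succ k ih =>
    rw [List.replicate_succ, List.flatten_cons]
    by_cases h : i < V.length
    · rw [List.getElem?_append_left h, Nat.mod_eq_of_lt h]
    · rw [List.getElem?_append_right (by omega), ih (by rw [Nat.succ_mul] at hi; omega),
        ← Nat.mod_eq_sub_mod (by omega)]

theorem isPeriodOf_length_flatten_replicate (hV : V ≠ []) {k : ℕ} (hk : k ≠ 0) :
    IsPeriodOf V.length (replicate k V).flatten := by
  have hV0 := List.length_pos_iff.mpr hV
  refine ⟨hV0, by simp; nlinarith [Nat.pos_of_ne_zero hk], fun i hi => ?_⟩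
  simp only [List.length_flatten, List.map_replicate, List.sum_replicate, smul_eq_mul] at hi
  rw [getElem?_flatten_replicate V (by omega), getElem?_flatten_replicate V hi,
    Nat.add_mod_right]

theorem IsPeriodOf.eq_flatten_replicate (h : IsPeriodOf p S) (hdvd : p ∣ S.length) :
    S = (replicate (S.length / p) (S.take p)).flatten := by
  have htake : (S.take p).length = p := by have := h.2.1; simp; omega
  have hlen : S.length / p * (S.take p).length = S.length := by
    rw [htake, Nat.div_mul_cancel hdvd]
  refine List.ext_getElem? fun i => ?_
  by_cases hi : i < S.length
  · rw [getElem?_flatten_replicate _ (by omega), htake,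
      List.getElem?_take_of_lt (Nat.mod_lt _ h.1)]
    exact h.getElem?_eq_of_modEq (Nat.mod_modEq i p).symm hi
      ((Nat.mod_lt _ h.1).trans_le h.2.1)
  · rw [getElem?_eq_none (by omega), getElem?_eq_none (by
      simp only [List.length_flatten, List.map_replicate, List.sum_replicate, smul_eq_mul, hlen]
      omega)]

theorem primitive_iff_minPeriod_append_self (hU : U ≠ []) :
    Primitive U ↔ minPeriod (U ++ U) = U.length := by
  have hmn : minPeriod (U ++ U) ≤ U.length := (isPeriodOf_length_append_self hU).minPeriod_le
  constructor
  · intro hprim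
    have hUm : IsPeriodOf (minPeriod (U ++ U)) U :=
      (List.prefix_append U U).isInfix.isPeriodOf (minPeriod_isPeriodOf (by simpa)) hmn
    have hdvd := minPeriod_append_self_dvd hU
    have hk := hprim.2 _ _ (hUm.eq_flatten_replicate hdvd)
    rw [← Nat.div_mul_cancel hdvd, hk, one_mul]
  · intro hmin
    refine ⟨hU, fun V k hk => ?_⟩
    have hk0 : k ≠ 0 := by rintro rfl; simp_all
    have hV : V ≠ [] := by rintro rfl; simp_all
    have hlen : U.length = k * V.length := by simp [hk]
    have hper := (hk ▸ isPeriodOf_length_flatten_replicate hV hk0).append_self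
      (Dvd.intro_left k hlen.symm)
    have := hper.minPeriod_le
    by_contra hk1
    have := List.length_pos_iff.mpr hV
    nlinarith [show 2 ≤ k by omega]

theorem minPeriod_append_self_eq_length_of_lt (hU : U ≠ [])
    (h : minPeriod U < minPeriod (U ++ U)) : minPeriod (U ++ U) = U.length := by
  set m := minPeriod (U ++ U)
  have hmn : m ≤ U.length := (isPeriodOf_length_append_self hU).minPeriod_le
  obtain ⟨c, hc⟩ := minPeriod_append_self_dvd hU
  by_contra hne
  have h2m : 2 * m ≤ U.length := by
    have := List.length_pos_iff.mpr hU
    rcases Nat.lt_or_ge c 2 with hc2 | hc2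
    · interval_cases c <;> omega
    · rw [hc]; nlinarith
  have hUq := minPeriod_isPeriodOf hU
  have hUm : IsPeriodOf m U :=
    (List.prefix_append U U).isInfix.isPeriodOf (minPeriod_isPeriodOf (by simpa)) hmn
  have hg := (hUq.gcd hUm (by have := hUm.minPeriod_le; omega)).append_self
    ((Nat.gcd_dvd_right _ _).trans ⟨c, hc⟩)
  have := hg.minPeriod_le
  have := Nat.gcd_le_left m (minPeriod_pos hU)
  omega

theorem not_infix_of_minPeriod_lt (hprim : minPeriod (U ++ U) = U.length) (hS : S ≠ [])
    (h : minPeriod S < U.length) : ¬ U ++ U <:+: S := fun hUU => by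
  have := (hUU.isPeriodOf (minPeriod_isPeriodOf hS) (by simp; omega)).minPeriod_le
  omega

/-- Since `4 per(U) ≤ |U|`, one of the two pieces `U = A ++ B` with `V = B ++ A` has length at
least `2 per(U)`; Fine–Wilf on that piece would give `U` a period `gcd (per U) p < per U`. -/
theorem minPeriod_le_of_isRotated (hUV : U ~r V) (hV : IsPeriodOf p V)
    (hU : 4 * minPeriod U ≤ U.length) : minPeriod U ≤ p := by
  have hlen := hUV.perm.length_eq
  have hU0 : U ≠ [] := List.ne_nil_of_length_pos (by have := hV.1; have := hV.2.1; omega)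
  have hUq := minPeriod_isPeriodOf hU0
  have key (Y : List α) (hYU : Y <:+: U) (hYV : Y <:+: V) (hY : 2 * minPeriod U ≤ Y.length) :
      minPeriod U ≤ p := by
    by_contra! hpq
    have hgp := Nat.gcd_le_left (minPeriod U) hV.1
    have hg := (hYV.isPeriodOf hV (by omega)).gcd (hYU.isPeriodOf hUq (by omega)) (by omega)
    have := (hUq.of_infix_of_dvd hYU hg (Nat.gcd_dvd_right _ _) (by omega)).minPeriod_le
    omega
  obtain ⟨c, hc, rfl⟩ := List.isRotated_iff_mod.mp hUV
  rw [List.rotate_eq_drop_append_take hc] at key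
  by_cases h : 2 * minPeriod U ≤ U.length - c
  · exact key _ (List.drop_suffix c U).isInfix (List.prefix_append _ _).isInfix (by simpa)
  · exact key _ (List.take_prefix c U).isInfix (List.suffix_append _ _).isInfix
      (by simp; omega)

theorem subper_eq_minPeriod {R : List α} (hU : U ≠ []) (hUU : U ++ U <:+: R)
    (hprim : minPeriod (U ++ U) = U.length) (hR : minPeriod R = U.length)
    (hhp : 4 * minPeriod U ≤ U.length) : subper R = minPeriod U := by
  refine IsLeast.csInf_eq ⟨⟨U, hU, hUU, by rw [hprim, hR], rfl⟩, ?_⟩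
  rintro _ ⟨X, hX, hXX, hXmin, rfl⟩
  have hRn : IsPeriodOf U.length R :=
    hR ▸ minPeriod_isPeriodOf (List.ne_nil_of_length_pos (by
      have := hUU.length_le; have := List.length_pos_iff.mpr hU; simp at *; omega))
  have hnX : U.length ≤ X.length :=
    hR ▸ hXmin ▸ (isPeriodOf_length_append_self hX).minPeriod_le
  rcases le_or_gt (minPeriod X) U.length with hle | hlt
  · have hXn : X.take U.length <:+: R :=
      (List.take_prefix _ X).isInfix.trans ((List.prefix_append X X).isInfix.trans hXX)
    have hrot : U ~r X.take U.length :=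
      (hRn.take_isRotated_of_infix ((List.prefix_append U U).isInfix.trans hUU) rfl).symm.trans
        (hRn.take_isRotated_of_infix hXn (by simp; omega))
    exact minPeriod_le_of_isRotated hrot ((List.take_prefix _ X).isInfix.isPeriodOf
      (minPeriod_isPeriodOf hX) (by simp; omega)) hhp
  · exact (minPeriod_le_length hU).trans hlt.le

theorem isRotated_iff_exists_rot (hW : W ≠ []) : W ~r V ↔ ∃ c < W.length, V = rot c W := by
  rw [List.isRotated_iff_mod]
  constructor
  · rintro ⟨c, hc, rfl⟩
    rcases hc.lt_or_eq with hc | rfl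
    · exact ⟨c, hc, List.rotate_eq_drop_append_take hc.le⟩
    · exact ⟨0, List.length_pos_iff.mpr hW, by simp [rot]⟩
  · rintro ⟨c, hc, rfl⟩
    exact ⟨c, hc.le, List.rotate_eq_drop_append_take hc.le⟩

theorem lyndonRootOf_iff [LinearOrder α] (hS : S ≠ []) {lam : List α} :
    LyndonRootOf S lam ↔
      S.take (minPeriod S) ~r lam ∧ ∀ V, S.take (minPeriod S) ~r V → lam ≤ V := by
  have hW : (S.take (minPeriod S)).length = minPeriod S := by simp [minPeriod_le_length hS]
  have hW0 : S.take (minPeriod S) ≠ [] :=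
    List.ne_nil_of_length_pos (by rw [hW]; exact minPeriod_pos hS)
  simp only [isRotated_iff_exists_rot hW0, hW, LyndonRootOf]
  grind

theorem exists_lyndonRootOf_of_infix [LinearOrder α] {S S' Y : List α} (hS : S ≠ [])
    (hS' : S' ≠ []) (hper : minPeriod S' = minPeriod S) (hY : Y <:+: S) (hY' : Y <:+: S')
    (hYlen : Y.length = minPeriod S) : ∃ lam, LyndonRootOf S lam ∧ LyndonRootOf S' lam := by
  have hrot := (minPeriod_isPeriodOf hS).take_isRotated_of_infix hY hYlen
  have hrot' := (minPeriod_isPeriodOf hS').take_isRotated_of_infix hY' (hYlen.trans hper.symm)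
  obtain ⟨lam, hmem, hmin⟩ := Y.cyclicPermutations.toFinset.exists_min_image id
    ⟨Y, List.mem_toFinset.mpr (List.mem_cyclicPermutations_self Y)⟩
  simp only [List.mem_toFinset, List.mem_cyclicPermutations_iff, id] at hmem hmin
  exact ⟨lam,
    (lyndonRootOf_iff hS).mpr ⟨hrot.trans hmem.symm, fun V hV => hmin V (hV.symm.trans hrot)⟩,
    (lyndonRootOf_iff hS').mpr
      ⟨hrot'.trans hmem.symm, fun V hV => hmin V (hV.symm.trans hrot')⟩⟩

theorem special_of_square_generated_by_infix {R W : List α} (hU : U ≠ []) (hWR : W <:+: R)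
    (hW : IsPeriodOf (minPeriod R) W) (h2 : 2 * minPeriod R ≤ W.length)
    (h4 : 4 * minPeriod U ≤ minPeriod R) (hUU : minPeriod (U ++ U) = minPeriod W) :
    Primitive U ∧ 4 * minPeriod U ≤ U.length := by
  have hW0 : W ≠ [] := List.ne_nil_of_length_pos (by have := hW.1; omega)
  have hR0 : R ≠ [] := List.ne_nil_of_length_pos (by have := hWR.length_le; have := hW.1; omega)
  have hWP : minPeriod W ≤ minPeriod R := hW.minPeriod_le
  have hRW : minPeriod R ≤ minPeriod W :=
    ((minPeriod_isPeriodOf hR0).of_infix_of_dvd hWR (minPeriod_isPeriodOf hW0)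
      (hW.minPeriod_dvd (by omega)) (by omega)).minPeriod_le
  have hn := minPeriod_append_self_eq_length_of_lt hU (by have := minPeriod_pos hU; omega)
  exact ⟨(primitive_iff_minPeriod_append_self hU).mpr hn, by omega⟩

variable {T : List α} {a b c d m s e : ℕ}

theorem frag_length (h : b < T.length) : (frag T a b).length = b + 1 - a := by
  simp only [frag, List.length_take, List.length_drop]; omega

theorem frag_getElem? {i : ℕ} (h : i < b + 1 - a) : (frag T a b)[i]? = T[a + i]? := by
  rw [frag, List.getElem?_take_of_lt h, List.getElem?_drop]

theorem frag_append (h₁ : a < m) (h₂ : m ≤ b + 1) :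
    frag T a (m - 1) ++ frag T m b = frag T a b := by
  simp only [frag]
  rw [show b + 1 - a = (m - 1 + 1 - a) + (b + 1 - m) by omega, List.take_add, List.drop_drop,
    show a + (m - 1 + 1 - a) = m by omega]

theorem frag_infix_frag (hac : a ≤ c) (hdb : d ≤ b) : frag T c d <:+: frag T a b := by
  have : frag T c d = ((T.drop a).take (d + 1 - a)).drop (c - a) := by
    rw [List.drop_take, List.drop_drop, frag, show a + (c - a) = c by omega,
      show d + 1 - a - (c - a) = d + 1 - c by omega]
  rw [this]
  exact (List.drop_suffix _ _).isInfix.trans (List.take_prefix_take_left (by omega)).isInfix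

theorem IsRun.frag_ne_nil (h : IsRun T a b) : frag T a b ≠ [] :=
  List.ne_nil_of_length_pos (by rw [frag_length h.2.1]; have := h.1; omega)

theorem exists_frag_eq_square (hU : U ≠ []) (h : U ++ U <:+: T) :
    ∃ s, s + 2 * U.length ≤ T.length ∧ frag T s (s + U.length - 1) = U ∧
      frag T (s + U.length) (s + 2 * U.length - 1) = U ∧
      frag T s (s + 2 * U.length - 1) = U ++ U := by
  obtain ⟨t, u, rfl⟩ := h
  have hn := List.length_pos_iff.mpr hU
  have hUU : frag (t ++ (U ++ U) ++ u) t.length (t.length + 2 * U.length - 1) = U ++ U := by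
    rw [frag, show t.length + 2 * U.length - 1 + 1 - t.length = (U ++ U).length by simp; omega,
      List.append_assoc, List.drop_left, List.take_left]
  obtain ⟨h₁, h₂⟩ := List.append_inj
    ((frag_append (m := t.length + U.length) (by omega) (by omega)).trans hUU)
    (by rw [frag_length (by simp; omega)]; omega)
  exact ⟨t.length, by simp; omega, h₁, h₂, hUU⟩

def PerOn (T : List α) (p lo hi : ℕ) : Prop :=
  ∀ i, lo ≤ i → i + p ≤ hi → T[i]? = T[i + p]?

theorem isPeriodOf_frag_iff {p : ℕ} (hb : b < T.length) :
    IsPeriodOf p (frag T a b) ↔ 0 < p ∧ p ≤ b + 1 - a ∧ PerOn T p a b := by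
  rw [IsPeriodOf, frag_length hb]
  refine and_congr_right fun _ => and_congr_right fun hp =>
    ⟨fun h i hai hib => ?_, fun h i hi => ?_⟩
  · have := h (i - a) (by omega)
    rwa [frag_getElem? (by omega), frag_getElem? (by omega), show a + (i - a) = i by omega,
      show a + (i - a + p) = i + p by omega] at this
  · rw [frag_getElem? (by omega), frag_getElem? (by omega), ← add_assoc]
    exact h _ (by omega) (by omega)

theorem PerOn.exists_right_maximal (h : PerOn T q s e) (he : e < T.length) :
    ∃ b, e ≤ b ∧ b < T.length ∧ PerOn T q s b ∧
      (b = T.length - 1 ∨ T[b + 1]? ≠ T[b + 1 - q]?) := by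
  classical
  set b := Nat.findGreatest (PerOn T q s) (T.length - 1)
  have hb : PerOn T q s b := Nat.findGreatest_spec (m := e) (by omega) h
  have hbT : b ≤ T.length - 1 := Nat.findGreatest_le _
  refine ⟨b, Nat.le_findGreatest (by omega) h, by omega, hb, ?_⟩
  by_contra! hne
  refine Nat.findGreatest_is_greatest (Nat.lt_succ_self b) (by omega) fun i hsi hiq => ?_
  rcases (show i + q ≤ b ∨ i + q = b + 1 by omega) with hib | hib
  · exact hb i hsi hib
  · rw [hib, show i = b + 1 - q by omega]
    exact hne.2.symm

theorem PerOn.exists_left_maximal (h : PerOn T q s b) :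
    ∃ a ≤ s, PerOn T q a b ∧ (a = 0 ∨ T[a - 1]? ≠ T[a - 1 + q]?) := by
  classical
  have hex : ∃ a, a ≤ s ∧ PerOn T q a b := ⟨s, le_rfl, h⟩
  obtain ⟨has, ha⟩ := Nat.find_spec hex
  refine ⟨Nat.find hex, has, ha, ?_⟩
  by_contra! hne
  have hprev : PerOn T q (Nat.find hex - 1) b := fun i hi hib => by
    rcases (show i = Nat.find hex - 1 ∨ Nat.find hex ≤ i by omega) with rfl | hi'
    · exact hne.2
    · exact ha i hi' hib
  have := Nat.find_min' hex ⟨by omega, hprev⟩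
  omega

theorem exists_run_of_frag_eq (hW : frag T s e = W) (hse : s ≤ e) (he : e < T.length)
    (h2 : 2 * minPeriod W ≤ e + 1 - s) :
    ∃ a b, a ≤ s ∧ e ≤ b ∧ IsRun T a b ∧ minPeriod (frag T a b) = minPeriod W := by
  subst hW
  have hne : frag T s e ≠ [] := List.ne_nil_of_length_pos (by rw [frag_length he]; omega)
  obtain ⟨hq, -, hper⟩ := (isPeriodOf_frag_iff he).mp (minPeriod_isPeriodOf hne)
  obtain ⟨b, heb, hbT, hperb, hbmax⟩ := hper.exists_right_maximal he
  obtain ⟨a, has, hpera, hamax⟩ := hperb.exists_left_maximal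
  have hab : IsPeriodOf (minPeriod (frag T s e)) (frag T a b) :=
    (isPeriodOf_frag_iff hbT).mpr ⟨hq, by omega, hpera⟩
  have hmin : minPeriod (frag T a b) = minPeriod (frag T s e) :=
    le_antisymm hab.minPeriod_le <| minPeriod_le_minPeriod_of_infix (frag_infix_frag has heb)
      (List.ne_nil_of_length_pos (by rw [frag_length hbT]; omega))
      (hab.minPeriod_le.trans (by rw [frag_length he]; omega))
  exact ⟨a, b, has, heb, ⟨by omega, hbT, by omega, by rwa [hmin], by rwa [hmin]⟩, hmin⟩

theorem isLayer_of_run_through_square {a' b' x y : ℕ} (hU : U ≠ [])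
    (hprim : minPeriod (U ++ U) = U.length) (hhp : 4 * minPeriod U ≤ U.length)
    (hUU : frag T s (s + 2 * U.length - 1) = U ++ U)
    (hR : IsRun T x y) (hRn : minPeriod (frag T x y) = U.length)
    (hF : minPeriod (frag T a b) = minPeriod U)
    (hxs : max x a ≤ s) (hsy : s + 2 * U.length - 1 ≤ min y b') :
    IsLayer T a b a' b' x y ∧ U ++ U <:+: frag T (max x a) (min y b') ∧
      minPeriod (U ++ U) = minPeriod (frag T (max x a) (min y b')) := by
  have hn := List.length_pos_iff.mpr hU
  have hWR : frag T (max x a) (min y b') <:+: frag T x y :=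
    frag_infix_frag (le_max_left _ _) (min_le_left _ _)
  have hUUW : U ++ U <:+: frag T (max x a) (min y b') := hUU ▸ frag_infix_frag hxs hsy
  have hWlen := hUUW.length_le
  simp only [List.length_append] at hWlen
  have hW : IsPeriodOf U.length (frag T (max x a) (min y b')) :=
    hWR.isPeriodOf (hRn ▸ minPeriod_isPeriodOf hR.frag_ne_nil) (by omega)
  have hWmin : minPeriod (frag T (max x a) (min y b')) = U.length :=
    le_antisymm hW.minPeriod_le <| hprim ▸ minPeriod_le_minPeriod_of_infix hUUW
      (List.ne_nil_of_length_pos (by omega)) (hW.minPeriod_le.trans (by simp))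
  have hsub := subper_eq_minPeriod hU (hUUW.trans hWR) hprim hRn hhp
  exact ⟨⟨hR, by rw [hsub, hRn]; exact hhp, hsub.trans hF.symm, by rw [hRn]; omega, hRn ▸ hW⟩,
    hUUW, hprim.trans hWmin.symm⟩

end

/-- A square `U²` occurring in `T` is special (primitive and highly periodic
root) iff it is generated by the intersection of a layer of some pyramid with
the union of its two defining runs, whose common period is `per(U)`. -/
theorem special_square_iff_pyramid [LinearOrder α] (T U : List α)
    (hU : U ≠ []) (hocc : (U ++ U) <:+: T) :
    (Primitive U ∧ 4 * minPeriod U ≤ U.length) ↔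
    ∃ a b a' b' x y : ℕ, a < a' ∧
      IsRun T a b ∧ IsRun T a' b' ∧ Neighboring a b a' b' ∧
      minPeriod (frag T a b) = minPeriod U ∧
      minPeriod (frag T a' b') = minPeriod U ∧
      (∃ lam : List α, LyndonRootOf (frag T a b) lam ∧
        LyndonRootOf (frag T a' b') lam) ∧
      IsLayer T a b a' b' x y ∧
      (U ++ U) <:+: frag T (max x a) (min y b') ∧
      minPeriod (U ++ U) = minPeriod (frag T (max x a) (min y b')) := by
  constructor
  · rintro ⟨hprim, hhp⟩
    rw [primitive_iff_minPeriod_append_self hU] at hprim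
    have hq := minPeriod_pos hU
    obtain ⟨s, hsT, hU₁, hU₂, hUU⟩ := exists_frag_eq_square hU hocc
    obtain ⟨a, b, has, hbe, hF, hFq⟩ := exists_run_of_frag_eq hU₁ (by omega) (by omega) (by omega)
    obtain ⟨a', b', has', hbe', hF', hF'q⟩ :=
      exists_run_of_frag_eq hU₂ (by omega) (by omega) (by omega)
    obtain ⟨x, y, hxs, hye, hR, hRn⟩ :=
      exists_run_of_frag_eq hUU (by omega) (by omega) (by rw [hprim]; omega)
    have haa' : a < a' := by
      by_contra! h
      exact not_infix_of_minPeriod_lt hprim hF'.frag_ne_nil (by omega)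
        (hUU ▸ frag_infix_frag (h.trans has) hbe')
    obtain ⟨hlayer, hgen, hper⟩ := isLayer_of_run_through_square (a' := a') (b' := b')
      hU hprim hhp hUU hR (hRn.trans hprim) hFq (by omega) (by omega)
    have hroot := exists_lyndonRootOf_of_infix hF.frag_ne_nil hF'.frag_ne_nil
      (hF'q.trans hFq.symm)
      ((List.take_prefix _ U).isInfix.trans (hU₁ ▸ frag_infix_frag has hbe))
      ((List.take_prefix _ U).isInfix.trans (hU₂ ▸ frag_infix_frag has' hbe'))
      (by rw [hFq, List.length_take_of_le (minPeriod_le_length hU)])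
    exact ⟨a, b, a', b', x, y, haa', hF, hF', ⟨by omega, by omega⟩, hFq, hF'q, hroot, hlayer,
      hgen, hper⟩
  · rintro ⟨a, b, a', b', x, y, -, -, -, -, hFq, -, -, ⟨hR, h4, hsub, h2, hW⟩, -, hper⟩
    rw [hsub, hFq] at h4
    exact special_of_square_generated_by_infix hU (frag_infix_frag (le_max_left _ _)
      (min_le_left _ _)) hW (by rwa [frag_length ((min_le_left _ _).trans_lt hR.2.1)]) h4 hper
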